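/- Let ℓ̃ be a convex differentiable function on n×D real matrices, A an invertible-like matrix constraint with smallest singular value σ_min(A), and let S, T be matrices with entries bounded by α. Suppose τ₂ ≥ 2‖∇ℓ̃(T)‖ (operator norm) and ℓ̃(S) + τ₂‖S‖_* ≤ ℓ̃(T) − τ₁‖A(S_{[d]} − T_{[d]})‖_F² + τ₂‖T‖_*, where S_{[d]} is the submatrix of the first d columns. Then ‖P_T^⊥(S−T)‖_* ≤ 3‖P_T(S−T)‖_* − (2τ₁/τ₂)σ_min(A)²‖S_{[d]} − T_{[d]}‖_F². -/

import Mathlib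

/-!
Write `Δ = S - T = P_T(Δ) + P_T^⊥(Δ)`. The matrices `T` and `P_T^⊥(Δ)` have orthogonal row and
column spaces, so their Gram matrices multiply to zero, the square root of the sum of the Gram
matrices is the sum of the square roots, and nuclear norms add:
`‖S‖_* ≥ ‖T + P_T^⊥(Δ)‖_* - ‖P_T(Δ)‖_* = ‖T‖_* + ‖P_T^⊥(Δ)‖_* - ‖P_T(Δ)‖_*`.
Trace duality `|tr(Gᵀ M)| ≤ ‖G‖ ‖M‖_*` with `‖G‖ ≤ τ₂ / 2` bounds the linear term of the
convexity inequality by `τ₂ / 2 (‖P_T(Δ)‖_* + ‖P_T^⊥(Δ)‖_*)`, and `‖A X‖_F ≥ σ_min(A) ‖X‖_F`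
column by column. Substituting both into the optimality inequality and dividing by `τ₂ / 2`
gives the bound. The triangle inequality for `‖·‖_*` comes from the dual certificate
`B = M (MᵀM)^(-1/2)`, which has `‖B‖ ≤ 1` and `tr(Bᵀ M) = ‖M‖_*`.
-/

open Matrix BigOperators MeasureTheory

noncomputable def singVals {m n : ℕ} (S : Matrix (Fin m) (Fin n) ℝ) : Fin n → ℝ :=
  fun i => Real.sqrt (((by simpa [Matrix.conjTranspose_eq_transpose_of_trivial] using Matrix.isHermitian_conjTranspose_mul_self S : (Sᵀ * S).IsHermitian)).eigenvalues i)

noncomputable def opNorm {m n : ℕ} (S : Matrix (Fin m) (Fin n) ℝ) : ℝ := ⨆ i, singVals S i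

noncomputable def sMin {m n : ℕ} (S : Matrix (Fin m) (Fin n) ℝ) : ℝ := ⨅ i, singVals S i

noncomputable def nuclearNorm {m n : ℕ} (S : Matrix (Fin m) (Fin n) ℝ) : ℝ := ∑ i, singVals S i

noncomputable def frob {m n : ℕ} (S : Matrix (Fin m) (Fin n) ℝ) : ℝ :=
  Real.sqrt (∑ i, ∑ j, (S i j) ^ 2)

open scoped MatrixOrder

namespace Matrix

variable {ι κ : Type*} [Fintype ι] [Fintype κ]

lemma dotProduct_sq_le_dotProduct_self_mul (a b : ι → ℝ) :
    (a ⬝ᵥ b) ^ 2 ≤ (a ⬝ᵥ a) * (b ⬝ᵥ b) := by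
  simpa only [dotProduct, sq] using Finset.sum_mul_sq_le_sq_mul_sq Finset.univ a b

lemma mulVec_dotProduct_mulVec (X Y : Matrix κ ι ℝ) (v w : ι → ℝ) :
    (X *ᵥ v) ⬝ᵥ (Y *ᵥ w) = v ⬝ᵥ ((Xᵀ * Y) *ᵥ w) := by
  rw [← mulVec_mulVec, dotProduct_mulVec v Xᵀ, vecMul_transpose]

omit [Fintype ι] in
lemma isHermitian_transpose_mul_self (M : Matrix κ ι ℝ) : (Mᵀ * M).IsHermitian := by
  simpa only [conjTranspose_eq_transpose_of_trivial] using isHermitian_conjTranspose_mul_self M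

lemma transpose_mul_self_nonneg (M : Matrix κ ι ℝ) : 0 ≤ Mᵀ * M := by
  simpa only [conjTranspose_eq_transpose_of_trivial] using
    nonneg_iff_posSemidef.mpr (posSemidef_conjTranspose_mul_self M)

variable [DecidableEq ι]

lemma trace_eq_sum_dotProduct_mulVec {Q : Matrix ι ι ℝ} (hQ : Q * Qᵀ = 1)
    (N : Matrix ι ι ℝ) : trace N = ∑ j, Qᵀ j ⬝ᵥ (N *ᵥ Qᵀ j) := by
  calc trace N = trace (Qᵀ * N * Q) := by
        rw [mul_assoc, trace_mul_comm, mul_assoc, hQ, mul_one]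
    _ = ∑ j, Qᵀ j ⬝ᵥ (N *ᵥ Qᵀ j) := by
      simp only [trace, diag, mul_apply, mulVec, dotProduct, transpose_apply, Finset.sum_mul,
        Finset.mul_sum]
      refine Finset.sum_congr rfl fun j _ => ?_
      rw [Finset.sum_comm]
      simp only [mul_assoc]

lemma dotProduct_self_eq_sum_transpose_mulVec_sq {Q : Matrix ι ι ℝ} (hQ : Q * Qᵀ = 1)
    (x : ι → ℝ) : x ⬝ᵥ x = ∑ i, (Qᵀ *ᵥ x) i ^ 2 := by
  have h : (Qᵀ *ᵥ x) ⬝ᵥ (Qᵀ *ᵥ x) = x ⬝ᵥ x := by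
    rw [dotProduct_mulVec, vecMul_transpose, mulVec_mulVec, hQ, one_mulVec, dotProduct_comm]
  rw [← h]
  simp only [dotProduct, sq]

lemma dotProduct_conj_diagonal_mulVec (Q : Matrix ι ι ℝ) (μ x : ι → ℝ) :
    x ⬝ᵥ ((Q * diagonal μ * Qᵀ) *ᵥ x) = ∑ i, μ i * (Qᵀ *ᵥ x) i ^ 2 := by
  rw [← mulVec_mulVec, ← mulVec_mulVec, dotProduct_mulVec, ← mulVec_transpose]
  simp only [dotProduct, mulVec_diagonal]
  exact Finset.sum_congr rfl fun i _ => by ring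

lemma dotProduct_conj_diagonal_mulVec_le {Q : Matrix ι ι ℝ} (hQ : Q * Qᵀ = 1) {μ : ι → ℝ}
    {c : ℝ} (hμ : ∀ i, μ i ≤ c) (x : ι → ℝ) :
    x ⬝ᵥ ((Q * diagonal μ * Qᵀ) *ᵥ x) ≤ c * (x ⬝ᵥ x) := by
  rw [dotProduct_conj_diagonal_mulVec, dotProduct_self_eq_sum_transpose_mulVec_sq hQ,
    Finset.mul_sum]
  exact Finset.sum_le_sum fun i _ => mul_le_mul_of_nonneg_right (hμ i) (sq_nonneg _)

lemma le_dotProduct_conj_diagonal_mulVec {Q : Matrix ι ι ℝ} (hQ : Q * Qᵀ = 1) {μ : ι → ℝ}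
    {c : ℝ} (hμ : ∀ i, c ≤ μ i) (x : ι → ℝ) :
    c * (x ⬝ᵥ x) ≤ x ⬝ᵥ ((Q * diagonal μ * Qᵀ) *ᵥ x) := by
  rw [dotProduct_conj_diagonal_mulVec, dotProduct_self_eq_sum_transpose_mulVec_sq hQ,
    Finset.mul_sum]
  exact Finset.sum_le_sum fun i _ => mul_le_mul_of_nonneg_right (hμ i) (sq_nonneg _)

namespace IsHermitian

variable {H : Matrix ι ι ℝ} (hH : H.IsHermitian)

lemma eigenvectorUnitary_mul_transpose :
    (hH.eigenvectorUnitary : Matrix ι ι ℝ) * (hH.eigenvectorUnitary : Matrix ι ι ℝ)ᵀ = 1 := by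
  simpa [star_eq_conjTranspose] using Unitary.mul_star_self_of_mem hH.eigenvectorUnitary.2

lemma transpose_mul_eigenvectorUnitary :
    (hH.eigenvectorUnitary : Matrix ι ι ℝ)ᵀ * (hH.eigenvectorUnitary : Matrix ι ι ℝ) = 1 := by
  simpa [star_eq_conjTranspose] using Unitary.star_mul_self_of_mem hH.eigenvectorUnitary.2

lemma eq_eigenvectorUnitary_mul_diagonal_mul_transpose :
    H = (hH.eigenvectorUnitary : Matrix ι ι ℝ) * diagonal hH.eigenvalues *
      (hH.eigenvectorUnitary : Matrix ι ι ℝ)ᵀ := by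
  conv_lhs => rw [hH.spectral_theorem]
  simp [Unitary.conjStarAlgAut_apply, star_eq_conjTranspose]

lemma transpose_eigenvectorUnitary_mul_mul :
    (hH.eigenvectorUnitary : Matrix ι ι ℝ)ᵀ * H * (hH.eigenvectorUnitary : Matrix ι ι ℝ) =
      diagonal hH.eigenvalues := by
  have hQ := hH.transpose_mul_eigenvectorUnitary
  have hspec := hH.eq_eigenvectorUnitary_mul_diagonal_mul_transpose
  generalize (hH.eigenvectorUnitary : Matrix ι ι ℝ) = Q at hQ hspec ⊢
  nth_rw 1 [hspec]
  rw [← mul_assoc, ← mul_assoc, hQ, one_mul, mul_assoc, hQ, mul_one]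

lemma eigenvectorBasis_dotProduct_self (i : ι) :
    ⇑(hH.eigenvectorBasis i) ⬝ᵥ ⇑(hH.eigenvectorBasis i) = 1 := by
  simpa [mul_apply, dotProduct] using congrFun₂ hH.transpose_mul_eigenvectorUnitary i i

lemma eigenvectorBasis_dotProduct_mulVec (i : ι) :
    ⇑(hH.eigenvectorBasis i) ⬝ᵥ (H *ᵥ ⇑(hH.eigenvectorBasis i)) = hH.eigenvalues i := by
  rw [hH.mulVec_eigenvectorBasis, dotProduct_smul, hH.eigenvectorBasis_dotProduct_self,
    smul_eq_mul, mul_one]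

lemma dotProduct_mulVec_le {c : ℝ} (h : ∀ i, hH.eigenvalues i ≤ c) (x : ι → ℝ) :
    x ⬝ᵥ (H *ᵥ x) ≤ c * (x ⬝ᵥ x) := by
  rw [hH.eq_eigenvectorUnitary_mul_diagonal_mul_transpose]
  exact dotProduct_conj_diagonal_mulVec_le hH.eigenvectorUnitary_mul_transpose h x

lemma le_dotProduct_mulVec {c : ℝ} (h : ∀ i, c ≤ hH.eigenvalues i) (x : ι → ℝ) :
    c * (x ⬝ᵥ x) ≤ x ⬝ᵥ (H *ᵥ x) := by
  rw [hH.eq_eigenvectorUnitary_mul_diagonal_mul_transpose]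
  exact le_dotProduct_conj_diagonal_mulVec hH.eigenvectorUnitary_mul_transpose h x

lemma eigenvalues_le_of_dotProduct_mulVec_le {c : ℝ}
    (h : ∀ x, x ⬝ᵥ (H *ᵥ x) ≤ c * (x ⬝ᵥ x)) (i : ι) : hH.eigenvalues i ≤ c := by
  simpa [hH.eigenvectorBasis_dotProduct_mulVec, hH.eigenvectorBasis_dotProduct_self]
    using h (hH.eigenvectorBasis i)

lemma trace_cfc (f : ℝ → ℝ) : trace (cfc f H) = ∑ i, f (hH.eigenvalues i) := by
  rw [hH.cfc_eq, IsHermitian.cfc, Unitary.conjStarAlgAut_apply, trace_mul_cycle,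
    Unitary.coe_star_mul_self, one_mul, trace_diagonal]
  rfl

end IsHermitian

lemma sqrt_mul_sqrt_eq_zero {P Q : Matrix ι ι ℝ} (hP : 0 ≤ P) (hQ : 0 ≤ Q) (hPQ : P * Q = 0) :
    CFC.sqrt P * CFC.sqrt Q = 0 := by
  have hsP : (CFC.sqrt P)ᴴ = CFC.sqrt P := (CFC.sqrt_nonneg P).isSelfAdjoint
  have hsQ : (CFC.sqrt Q)ᴴ = CFC.sqrt Q := (CFC.sqrt_nonneg Q).isSelfAdjoint
  have hQ' : Qᴴ = Q := hQ.isSelfAdjoint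
  have hsPQ : CFC.sqrt P * Q = 0 := by
    rw [← conjTranspose_mul_self_eq_zero, conjTranspose_mul, hsP, hQ', mul_assoc,
      ← mul_assoc (CFC.sqrt P), CFC.sqrt_mul_sqrt_self P hP, hPQ, mul_zero]
  rw [← self_mul_conjTranspose_eq_zero, conjTranspose_mul, hsP, hsQ, mul_assoc,
    ← mul_assoc (CFC.sqrt Q), CFC.sqrt_mul_sqrt_self Q hQ, ← mul_assoc, hsPQ, zero_mul]

lemma sqrt_add_of_mul_eq_zero {P Q : Matrix ι ι ℝ} (hP : 0 ≤ P) (hQ : 0 ≤ Q)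
    (hPQ : P * Q = 0) : CFC.sqrt (P + Q) = CFC.sqrt P + CFC.sqrt Q := by
  have hQP : Q * P = 0 := by
    have hP' : Pᴴ = P := hP.isSelfAdjoint
    have hQ' : Qᴴ = Q := hQ.isSelfAdjoint
    rw [← conjTranspose_conjTranspose (Q * P), conjTranspose_mul, hP', hQ', hPQ,
      conjTranspose_zero]
  refine CFC.sqrt_unique ?_ (add_nonneg (CFC.sqrt_nonneg P) (CFC.sqrt_nonneg Q))
  rw [add_mul, mul_add, mul_add, CFC.sqrt_mul_sqrt_self P hP, CFC.sqrt_mul_sqrt_self Q hQ,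
    sqrt_mul_sqrt_eq_zero hP hQ hPQ, sqrt_mul_sqrt_eq_zero hQ hP hQP, add_zero, zero_add]

end Matrix

section SingularValues

variable {m n : ℕ}

lemma singVals_eq_sqrt_eigenvalues (M : Matrix (Fin m) (Fin n) ℝ) (i : Fin n) :
    singVals M i = √((isHermitian_transpose_mul_self M).eigenvalues i) :=
  rfl

lemma singVals_nonneg (M : Matrix (Fin m) (Fin n) ℝ) (i : Fin n) : 0 ≤ singVals M i :=
  Real.sqrt_nonneg _

lemma sq_singVals (M : Matrix (Fin m) (Fin n) ℝ) (i : Fin n) :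
    singVals M i ^ 2 = (isHermitian_transpose_mul_self M).eigenvalues i :=
  Real.sq_sqrt (eigenvalues_conjTranspose_mul_self_nonneg M i)

lemma opNorm_nonneg (M : Matrix (Fin m) (Fin n) ℝ) : 0 ≤ opNorm M :=
  Real.iSup_nonneg (singVals_nonneg M)

lemma sMin_nonneg (M : Matrix (Fin m) (Fin n) ℝ) : 0 ≤ sMin M :=
  Real.iInf_nonneg (singVals_nonneg M)

lemma nuclearNorm_nonneg (M : Matrix (Fin m) (Fin n) ℝ) : 0 ≤ nuclearNorm M :=
  Finset.sum_nonneg fun i _ => singVals_nonneg M i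

lemma singVals_le_opNorm (M : Matrix (Fin m) (Fin n) ℝ) (i : Fin n) :
    singVals M i ≤ opNorm M :=
  le_ciSup (Set.finite_range _).bddAbove i

lemma sMin_le_singVals (M : Matrix (Fin m) (Fin n) ℝ) (i : Fin n) :
    sMin M ≤ singVals M i :=
  ciInf_le (Set.finite_range _).bddBelow i

lemma mulVec_dotProduct_self_le_opNorm_sq (M : Matrix (Fin m) (Fin n) ℝ) (v : Fin n → ℝ) :
    (M *ᵥ v) ⬝ᵥ (M *ᵥ v) ≤ opNorm M ^ 2 * (v ⬝ᵥ v) := by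
  rw [mulVec_dotProduct_mulVec]
  refine (isHermitian_transpose_mul_self M).dotProduct_mulVec_le (fun i => ?_) v
  rw [← sq_singVals]
  exact pow_le_pow_left₀ (singVals_nonneg M i) (singVals_le_opNorm M i) 2

lemma sMin_sq_mul_le_mulVec_dotProduct_self (M : Matrix (Fin m) (Fin n) ℝ) (v : Fin n → ℝ) :
    sMin M ^ 2 * (v ⬝ᵥ v) ≤ (M *ᵥ v) ⬝ᵥ (M *ᵥ v) := by
  rw [mulVec_dotProduct_mulVec]
  refine (isHermitian_transpose_mul_self M).le_dotProduct_mulVec (fun i => ?_) v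
  rw [← sq_singVals]
  exact pow_le_pow_left₀ (sMin_nonneg M) (sMin_le_singVals M i) 2

lemma opNorm_le_of_mulVec_dotProduct_self_le (M : Matrix (Fin m) (Fin n) ℝ) {c : ℝ}
    (hc : 0 ≤ c) (h : ∀ v, (M *ᵥ v) ⬝ᵥ (M *ᵥ v) ≤ c ^ 2 * (v ⬝ᵥ v)) : opNorm M ≤ c := by
  refine Real.iSup_le (fun i => ?_) hc
  have heig := (isHermitian_transpose_mul_self M).eigenvalues_le_of_dotProduct_mulVec_le
    (fun v => by rw [← mulVec_dotProduct_mulVec]; exact h v) i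
  rw [singVals_eq_sqrt_eigenvalues, ← Real.sqrt_sq hc]
  exact Real.sqrt_le_sqrt heig

lemma frob_sq_eq_sum_dotProduct (M : Matrix (Fin m) (Fin n) ℝ) :
    frob M ^ 2 = ∑ j, Mᵀ j ⬝ᵥ Mᵀ j := by
  rw [frob, Real.sq_sqrt (by positivity), Finset.sum_comm]
  simp only [dotProduct, transpose_apply, sq]

lemma sMin_sq_mul_frob_sq_le {p : ℕ} (A : Matrix (Fin p) (Fin m) ℝ)
    (X : Matrix (Fin m) (Fin n) ℝ) : sMin A ^ 2 * frob X ^ 2 ≤ frob (A * X) ^ 2 := by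
  have hcol : ∀ j, (A * X)ᵀ j = A *ᵥ Xᵀ j := fun j => by
    ext i; simp [mul_apply, mulVec, dotProduct]
  simp only [frob_sq_eq_sum_dotProduct, hcol, Finset.mul_sum]
  exact Finset.sum_le_sum fun j _ => sMin_sq_mul_le_mulVec_dotProduct_self A _

end SingularValues

section NuclearNorm

variable {m n : ℕ}

lemma abs_trace_transpose_mul_le (G M : Matrix (Fin m) (Fin n) ℝ) :
    |trace (Gᵀ * M)| ≤ opNorm G * nuclearNorm M := by
  set hH := isHermitian_transpose_mul_self M
  have hcol : ∀ j, |(G *ᵥ hH.eigenvectorBasis j) ⬝ᵥ (M *ᵥ hH.eigenvectorBasis j)| ≤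
      opNorm G * singVals M j := by
    intro j
    refine abs_le_of_sq_le_sq ?_ (mul_nonneg (opNorm_nonneg G) (singVals_nonneg M j))
    have hG := mulVec_dotProduct_self_le_opNorm_sq G (hH.eigenvectorBasis j)
    rw [hH.eigenvectorBasis_dotProduct_self, mul_one] at hG
    have hM : (M *ᵥ hH.eigenvectorBasis j) ⬝ᵥ (M *ᵥ hH.eigenvectorBasis j) =
        singVals M j ^ 2 := by
      rw [mulVec_dotProduct_mulVec, hH.eigenvectorBasis_dotProduct_mulVec, sq_singVals]
    calc _ ≤ ((G *ᵥ hH.eigenvectorBasis j) ⬝ᵥ (G *ᵥ hH.eigenvectorBasis j)) *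
          ((M *ᵥ hH.eigenvectorBasis j) ⬝ᵥ (M *ᵥ hH.eigenvectorBasis j)) :=
          dotProduct_sq_le_dotProduct_self_mul _ _
      _ ≤ opNorm G ^ 2 * singVals M j ^ 2 := by rw [hM]; gcongr
      _ = _ := by ring
  calc |trace (Gᵀ * M)|
      = |∑ j, (G *ᵥ hH.eigenvectorBasis j) ⬝ᵥ (M *ᵥ hH.eigenvectorBasis j)| := by
        simp [trace_eq_sum_dotProduct_mulVec hH.eigenvectorUnitary_mul_transpose,
          mulVec_dotProduct_mulVec]
    _ ≤ ∑ j, |(G *ᵥ hH.eigenvectorBasis j) ⬝ᵥ (M *ᵥ hH.eigenvectorBasis j)| :=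
        Finset.abs_sum_le_sum_abs _ _
    _ ≤ ∑ j, opNorm G * singVals M j := Finset.sum_le_sum fun j _ => hcol j
    _ = opNorm G * nuclearNorm M := (Finset.mul_sum _ _ _).symm

lemma exists_opNorm_le_one_trace_eq_nuclearNorm (M : Matrix (Fin m) (Fin n) ℝ) :
    ∃ B : Matrix (Fin m) (Fin n) ℝ, opNorm B ≤ 1 ∧ trace (Bᵀ * M) = nuclearNorm M := by
  set hH := isHermitian_transpose_mul_self M
  set Q : Matrix (Fin n) (Fin n) ℝ := ↑hH.eigenvectorUnitary
  -- `B = M (MᵀM)^(-1/2)`, where `0⁻¹ = 0` switches `B` off on the kernel of `M`.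
  set g : Fin n → ℝ := fun i => (singVals M i)⁻¹
  have hdiag : Qᵀ * (Mᵀ * M) * Q = diagonal hH.eigenvalues :=
    hH.transpose_eigenvectorUnitary_mul_mul
  refine ⟨M * (Q * diagonal g * Qᵀ), ?_, ?_⟩
  · have hgram : (M * (Q * diagonal g * Qᵀ))ᵀ * (M * (Q * diagonal g * Qᵀ)) =
        Q * diagonal (fun i => g i * hH.eigenvalues i * g i) * Qᵀ := by
      calc _ = Q * (diagonal g * (Qᵀ * (Mᵀ * M) * Q) * diagonal g) * Qᵀ := by
            simp only [transpose_mul, diagonal_transpose, transpose_transpose, Matrix.mul_assoc]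
        _ = _ := by rw [hdiag, diagonal_mul_diagonal, diagonal_mul_diagonal]
    refine opNorm_le_of_mulVec_dotProduct_self_le _ zero_le_one fun v => ?_
    rw [mulVec_dotProduct_mulVec, hgram, one_pow]
    refine dotProduct_conj_diagonal_mulVec_le hH.eigenvectorUnitary_mul_transpose (fun i => ?_) v
    calc g i * hH.eigenvalues i * g i = ((singVals M i)⁻¹ * singVals M i) ^ 2 := by
          rw [← sq_singVals]; ring
      _ ≤ 1 := pow_le_one₀ (mul_nonneg (inv_nonneg.2 (singVals_nonneg M i))
          (singVals_nonneg M i)) inv_mul_le_one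
  · calc trace ((M * (Q * diagonal g * Qᵀ))ᵀ * M)
        = trace (Q * (diagonal g * Qᵀ * (Mᵀ * M))) := by
          simp only [transpose_mul, diagonal_transpose, transpose_transpose, Matrix.mul_assoc]
      _ = trace (diagonal g * (Qᵀ * (Mᵀ * M) * Q)) := by
          rw [trace_mul_comm]; simp only [Matrix.mul_assoc]
      _ = nuclearNorm M := by
          rw [hdiag, diagonal_mul_diagonal, trace_diagonal, nuclearNorm]
          simp only [g, ← sq_singVals, sq, ← mul_assoc, inv_mul_mul_self]

lemma nuclearNorm_sub_le (X Y : Matrix (Fin m) (Fin n) ℝ) :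
    nuclearNorm (X - Y) ≤ nuclearNorm X + nuclearNorm Y := by
  obtain ⟨B, hB, htr⟩ := exists_opNorm_le_one_trace_eq_nuclearNorm (X - Y)
  have hdual : ∀ Z, |trace (Bᵀ * Z)| ≤ nuclearNorm Z := fun Z =>
    (abs_trace_transpose_mul_le B Z).trans (mul_le_of_le_one_left (nuclearNorm_nonneg Z) hB)
  have hX := (le_abs_self _).trans (hdual X)
  have hY := (neg_le_abs _).trans (hdual Y)
  calc nuclearNorm (X - Y) = trace (Bᵀ * X) - trace (Bᵀ * Y) := by
        rw [← htr, Matrix.mul_sub, trace_sub]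
    _ ≤ nuclearNorm X + nuclearNorm Y := (sub_eq_add_neg _ _).trans_le (add_le_add hX hY)

lemma abs_trace_transpose_mul_le_add (G X Y : Matrix (Fin m) (Fin n) ℝ) :
    |trace (Gᵀ * X)| ≤ opNorm G * (nuclearNorm (X - Y) + nuclearNorm Y) := by
  calc |trace (Gᵀ * X)| = |trace (Gᵀ * (X - Y)) + trace (Gᵀ * Y)| := by
        rw [← trace_add, ← Matrix.mul_add, sub_add_cancel]
    _ ≤ |trace (Gᵀ * (X - Y))| + |trace (Gᵀ * Y)| := abs_add_le _ _
    _ ≤ opNorm G * (nuclearNorm (X - Y) + nuclearNorm Y) := by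
        rw [mul_add]
        exact add_le_add (abs_trace_transpose_mul_le G _) (abs_trace_transpose_mul_le G Y)

lemma nuclearNorm_eq_trace_sqrt (M : Matrix (Fin m) (Fin n) ℝ) :
    nuclearNorm M = trace (CFC.sqrt (Mᵀ * M)) := by
  rw [CFC.sqrt_eq_real_sqrt _ (transpose_mul_self_nonneg M), cfcₙ_eq_cfc,
    (isHermitian_transpose_mul_self M).trace_cfc]
  rfl

lemma nuclearNorm_add_of_orthogonal {X Y : Matrix (Fin m) (Fin n) ℝ}
    (h₁ : Xᵀ * Y = 0) (h₂ : X * Yᵀ = 0) :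
    nuclearNorm (X + Y) = nuclearNorm X + nuclearNorm Y := by
  have h₁' : Yᵀ * X = 0 := by
    rw [← transpose_transpose (Yᵀ * X), transpose_mul, transpose_transpose, h₁, transpose_zero]
  have hgram : (X + Y)ᵀ * (X + Y) = Xᵀ * X + Yᵀ * Y := by
    rw [transpose_add, Matrix.add_mul, Matrix.mul_add, Matrix.mul_add, h₁, h₁', add_zero,
      zero_add]
  have hprod : Xᵀ * X * (Yᵀ * Y) = 0 := by
    rw [Matrix.mul_assoc, ← Matrix.mul_assoc X, h₂, Matrix.zero_mul, Matrix.mul_zero]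
  rw [nuclearNorm_eq_trace_sqrt, nuclearNorm_eq_trace_sqrt, nuclearNorm_eq_trace_sqrt, hgram,
    sqrt_add_of_mul_eq_zero (transpose_mul_self_nonneg X) (transpose_mul_self_nonneg Y) hprod,
    trace_add]

end NuclearNorm

section Projection

variable {R : Type*} [CommRing R] {m n k l : Type*} [Fintype m] [Fintype n] [Fintype k]
  [Fintype l] [DecidableEq m] [DecidableEq n]

/-- The paper's `P_T^⊥` for `T = U Σ Vᵀ`, when `U` and `V` have orthonormal columns. -/
def projPerp (U : Matrix m k R) (V : Matrix n l R) (M : Matrix m n R) : Matrix m n R :=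
  (1 - U * Uᵀ) * M * (1 - V * Vᵀ)

lemma transpose_mul_one_sub_mul_transpose [DecidableEq k] {U : Matrix m k R}
    (hU : Uᵀ * U = 1) : Uᵀ * (1 - U * Uᵀ) = 0 := by
  rw [Matrix.mul_sub, Matrix.mul_one, ← Matrix.mul_assoc, hU, Matrix.one_mul, sub_self]

variable {U : Matrix m k R} {V : Matrix n l R} {Sig : Matrix k l R}

lemma transpose_mul_projPerp [DecidableEq k] (hU : Uᵀ * U = 1) (M : Matrix m n R) :
    (U * Sig * Vᵀ)ᵀ * projPerp U V M = 0 := by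
  simp only [projPerp, transpose_mul, transpose_transpose, Matrix.mul_assoc]
  rw [← Matrix.mul_assoc Uᵀ, transpose_mul_one_sub_mul_transpose hU, Matrix.zero_mul,
    Matrix.mul_zero, Matrix.mul_zero]

lemma mul_projPerp_transpose [DecidableEq l] (hV : Vᵀ * V = 1) (M : Matrix m n R) :
    U * Sig * Vᵀ * (projPerp U V M)ᵀ = 0 := by
  simp only [projPerp, transpose_mul, transpose_sub, transpose_one, transpose_transpose,
    Matrix.mul_assoc]
  rw [← Matrix.mul_assoc Vᵀ, transpose_mul_one_sub_mul_transpose hV, Matrix.zero_mul,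
    Matrix.mul_zero, Matrix.mul_zero]

end Projection

lemma nuclearNorm_add_projPerp_sub_le {n D k l : ℕ} {U : Matrix (Fin n) (Fin k) ℝ}
    {V : Matrix (Fin D) (Fin l) ℝ} (hU : Uᵀ * U = 1) (hV : Vᵀ * V = 1)
    (Sig : Matrix (Fin k) (Fin l) ℝ) (S : Matrix (Fin n) (Fin D) ℝ) :
    nuclearNorm (U * Sig * Vᵀ) + nuclearNorm (projPerp U V (S - U * Sig * Vᵀ)) ≤
      nuclearNorm S + nuclearNorm ((S - U * Sig * Vᵀ) - projPerp U V (S - U * Sig * Vᵀ)) := by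
  rw [← nuclearNorm_add_of_orthogonal (transpose_mul_projPerp hU _)
    (mul_projPerp_transpose hV _)]
  convert nuclearNorm_sub_le S _ using 2
  abel

theorem nuclear_perp_bound_general {n D d p r : ℕ} (hd : d ≤ D)
    (ℓ : Matrix (Fin n) (Fin D) ℝ → ℝ) (G : Matrix (Fin n) (Fin D) ℝ)
    (S T : Matrix (Fin n) (Fin D) ℝ)
    (U : Matrix (Fin n) (Fin r) ℝ) (V : Matrix (Fin D) (Fin r) ℝ)
    (Sig : Matrix (Fin r) (Fin r) ℝ)
    (hU : Uᵀ * U = 1) (hV : Vᵀ * V = 1) (hsvd : T = U * Sig * Vᵀ)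
    (A : Matrix (Fin p) (Fin n) ℝ) (τ₁ τ₂ : ℝ)
    (hτ₁ : 0 ≤ τ₁) (hτ₂pos : 0 < τ₂)
    -- G = ∇ℓ̃(T) together with convexity of ℓ̃ (subgradient inequality)
    (hgrad : ∀ M, ℓ T + Matrix.trace (Gᵀ * (M - T)) ≤ ℓ M)
    (hτ₂ : 2 * opNorm G ≤ τ₂)
    (hmain : ℓ S + τ₂ * nuclearNorm S ≤
      ℓ T - τ₁ * frob (A * (S.submatrix id (Fin.castLE hd)
        - T.submatrix id (Fin.castLE hd))) ^ 2 + τ₂ * nuclearNorm T) :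
    nuclearNorm ((1 - U * Uᵀ) * (S - T) * (1 - V * Vᵀ)) ≤
      3 * nuclearNorm ((S - T) - (1 - U * Uᵀ) * (S - T) * (1 - V * Vᵀ))
        - 2 * τ₁ / τ₂ * sMin A ^ 2 *
          frob (S.submatrix id (Fin.castLE hd) - T.submatrix id (Fin.castLE hd)) ^ 2 := by
  set Δ := S.submatrix id (Fin.castLE hd) - T.submatrix id (Fin.castLE hd)
  change nuclearNorm (projPerp U V (S - T)) ≤
    3 * nuclearNorm ((S - T) - projPerp U V (S - T)) - 2 * τ₁ / τ₂ * sMin A ^ 2 * frob Δ ^ 2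
  set P := nuclearNorm (projPerp U V (S - T))
  set Q := nuclearNorm ((S - T) - projPerp U V (S - T))
  have hdecomp : nuclearNorm T + P ≤ nuclearNorm S + Q := by
    subst hsvd; exact nuclearNorm_add_projPerp_sub_le hU hV Sig S
  have hlinear : |trace (Gᵀ * (S - T))| ≤ τ₂ / 2 * (Q + P) :=
    (abs_trace_transpose_mul_le_add G _ (projPerp U V (S - T))).trans
      (mul_le_mul_of_nonneg_right (by linarith)
        (add_nonneg (nuclearNorm_nonneg _) (nuclearNorm_nonneg _)))
  have hcurv := mul_le_mul_of_nonneg_left (sMin_sq_mul_frob_sq_le A Δ) hτ₁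
  have hnorm := mul_le_mul_of_nonneg_left hdecomp hτ₂pos.le
  have hkey : τ₂ * P + 2 * τ₁ * (sMin A ^ 2 * frob Δ ^ 2) ≤ τ₂ * (3 * Q) := by
    linarith [hgrad S, neg_abs_le (trace (Gᵀ * (S - T)))]
  rw [le_sub_iff_add_le, ← mul_le_mul_iff_right₀ hτ₂pos]
  calc τ₂ * (P + 2 * τ₁ / τ₂ * sMin A ^ 2 * frob Δ ^ 2)
      = τ₂ * P + 2 * τ₁ * (sMin A ^ 2 * frob Δ ^ 2) := by field_simp
    _ ≤ τ₂ * (3 * Q) := hkey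

/-- Lemma 3 (part 1): under the optimality inequality with calibration penalty,
    ‖P_T^⊥(S−T)‖_* ≤ 3‖P_T(S−T)‖_* − (2τ₁/τ₂)σ_min(A)²‖S_{[d]} − T_{[d]}‖_F².
    The SVD of T is given by U Σ Vᵀ with orthonormal columns, so that
    P_T^⊥(M) = (I − UUᵀ) M (I − VVᵀ) and P_T(M) = M − P_T^⊥(M). -/
theorem nuclear_perp_bound {n D d p r : ℕ} (hd : d ≤ D)
    (ℓ : Matrix (Fin n) (Fin D) ℝ → ℝ) (G : Matrix (Fin n) (Fin D) ℝ)
    (S T : Matrix (Fin n) (Fin D) ℝ)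
    (U : Matrix (Fin n) (Fin r) ℝ) (V : Matrix (Fin D) (Fin r) ℝ)
    (Sig : Matrix (Fin r) (Fin r) ℝ)
    (hU : Uᵀ * U = 1) (hV : Vᵀ * V = 1) (hsvd : T = U * Sig * Vᵀ)
    (A : Matrix (Fin p) (Fin n) ℝ) (α τ₁ τ₂ : ℝ)
    (hα : 0 ≤ α) (hτ₁ : 0 ≤ τ₁) (hτ₂pos : 0 < τ₂)
    (hSα : ∀ i j, |S i j| ≤ α) (hTα : ∀ i j, |T i j| ≤ α)
    -- G = ∇ℓ̃(T) together with convexity of ℓ̃ (subgradient inequality)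
    (hgrad : ∀ M, ℓ T + Matrix.trace (Gᵀ * (M - T)) ≤ ℓ M)
    (hτ₂ : 2 * opNorm G ≤ τ₂)
    (hmain : ℓ S + τ₂ * nuclearNorm S ≤
      ℓ T - τ₁ * frob (A * (S.submatrix id (Fin.castLE hd)
        - T.submatrix id (Fin.castLE hd))) ^ 2 + τ₂ * nuclearNorm T) :
    nuclearNorm ((1 - U * Uᵀ) * (S - T) * (1 - V * Vᵀ)) ≤
      3 * nuclearNorm ((S - T) - (1 - U * Uᵀ) * (S - T) * (1 - V * Vᵀ))
        - 2 * τ₁ / τ₂ * sMin A ^ 2 *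
          frob (S.submatrix id (Fin.castLE hd) - T.submatrix id (Fin.castLE hd)) ^ 2 :=
  nuclear_perp_bound_general hd ℓ G S T U V Sig hU hV hsvd A τ₁ τ₂ hτ₁ hτ₂pos hgrad hτ₂ hmain
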